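/- Let q ≥ 4 be an even integer, ε ∈ (0, 1/2], n ≥ 1, and let ρ ≥ 1 be a real number such that α_ε^{1/ρ} ≥ 1/2. Then the minimum of Qⁿ(ρ, P) over all probability mass functions P on (ZMod q)ⁿ equals (2/q)ⁿ; equivalently, E_x^n(ρ) := −(ρ/n) log₂ min_P Qⁿ(ρ, P) = ρ log₂(q/2). -/
import Mathlib
set_option linter.unusedSectionVars false
set_option maxHeartbeats 1000000

/-- The typewriter channel transition probabilities on `ZMod q`. -/
noncomputable def W (q : ℕ) (ε : ℝ) (y x : ZMod q) : ℝ :=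
  if y = x then 1 - ε else if y = x + 1 then ε else 0

/-- `α_ε = √(ε(1-ε))`. -/
noncomputable def alphaE (ε : ℝ) : ℝ := Real.sqrt (ε * (1 - ε))

/-- Single-letter Bhattacharyya kernel `g₁(a,b) = Σ_y √(W(y|a) W(y|b))`. -/
noncomputable def g1 (q : ℕ) [NeZero q] (ε : ℝ) (a b : ZMod q) : ℝ :=
  ∑ y : ZMod q, Real.sqrt (W q ε y a * W q ε y b)

/-- `gₙ(x,x') = ∏ₖ g₁(xₖ, x'ₖ)`. -/
noncomputable def gn (q : ℕ) [NeZero q] (n : ℕ) (ε : ℝ) (x x' : Fin n → ZMod q) : ℝ :=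
  ∏ k, g1 q ε (x k) (x' k)

/-- The quadratic form `Qⁿ(ρ, P) = Σ_{x,x'} P(x)P(x') gₙ(x,x')^{1/ρ}`
(real `rpow`, so `0^{1/ρ} = 0` for `ρ ≥ 1`). -/
noncomputable def Qn (q : ℕ) [NeZero q] (n : ℕ) (ε ρ : ℝ)
    (P : (Fin n → ZMod q) → ℝ) : ℝ :=
  ∑ x : Fin n → ZMod q, ∑ x' : Fin n → ZMod q,
    P x * P x' * (gn q n ε x x') ^ (1 / ρ)

section aux
variable {q : ℕ} [NeZero q]

lemma one_nz (hq : 4 ≤ q) : (1 : ZMod q) ≠ 0 := by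
  intro h
  have : ((1 : ℕ) : ZMod q) = 0 := by exact_mod_cast h
  have := (ZMod.natCast_eq_zero_iff 1 q).mp this
  have := Nat.le_of_dvd one_pos this
  omega

lemma two_nz (hq : 4 ≤ q) : (2 : ZMod q) ≠ 0 := by
  intro h
  have : ((2 : ℕ) : ZMod q) = 0 := by exact_mod_cast h
  have := (ZMod.natCast_eq_zero_iff 2 q).mp this
  have := Nat.le_of_dvd two_pos this
  omega

lemma add_one_ne (hq : 4 ≤ q) (a : ZMod q) : a + 1 ≠ a := by
  intro h
  nth_rewrite 2 [← add_zero a] at h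
  exact one_nz hq (add_left_cancel h)

lemma add_two_ne (hq : 4 ≤ q) (a : ZMod q) : a + 1 + 1 ≠ a := by
  intro h
  rw [add_assoc] at h
  nth_rewrite 2 [← add_zero a] at h
  have := add_left_cancel h
  exact two_nz hq (by rw [← this]; ring)

variable (hq : 4 ≤ q) {ε : ℝ} (hε0 : 0 ≤ ε) (hε1 : ε ≤ 1)

include hq hε0 hε1

lemma g1_self (a : ZMod q) : g1 q ε a a = 1 := by
  have key : ∀ y : ZMod q, Real.sqrt (W q ε y a * W q ε y a)
      = (if y = a then 1 - ε else 0) + (if y = a + 1 then ε else 0) := by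
    intro y
    rcases eq_or_ne y a with h | h
    · subst h
      simp [W, (add_one_ne hq y).symm, Real.sqrt_mul_self (by linarith : (0:ℝ) ≤ 1 - ε)]
    · rcases eq_or_ne y (a + 1) with h2 | h2
      · subst h2
        simp [W, h, Real.sqrt_mul_self hε0, (add_one_ne hq a)]
      · simp [W, h, h2]
  rw [g1]
  simp only [key, Finset.sum_add_distrib, Finset.sum_ite_eq' Finset.univ,
    Finset.mem_univ, if_true]
  ring

lemma g1_adj (a : ZMod q) : g1 q ε a (a + 1) = alphaE ε := by
  have key : ∀ y : ZMod q, Real.sqrt (W q ε y a * W q ε y (a + 1))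
      = (if y = a + 1 then alphaE ε else 0) := by
    intro y
    rcases eq_or_ne y a with h | h
    · subst h
      simp [W, (add_one_ne hq y).symm, (add_two_ne hq y).symm, alphaE]
    · rcases eq_or_ne y (a + 1) with h2 | h2
      · subst h2
        simp [W, h, alphaE, mul_comm]
      · simp [W, h, h2]
  rw [g1]
  simp only [key, Finset.sum_ite_eq' Finset.univ, Finset.mem_univ, if_true]

lemma g1_far {a b : ZMod q} (h1 : a ≠ b) (h2 : a ≠ b + 1) (h3 : b ≠ a + 1) :
    g1 q ε a b = 0 := by
  rw [g1]
  apply Finset.sum_eq_zero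
  intro y _
  rcases eq_or_ne y a with h | h
  · subst h; simp [W, h1, h2]
  · rcases eq_or_ne y (a + 1) with h4 | h4
    · subst h4
      have : a + 1 ≠ b + 1 := fun hc => h1 (add_right_cancel hc)
      simp [W, h3.symm, this]
    · simp [W, h, h4]

end aux

noncomputable def uf (q : ℕ) [NeZero q] (y a : ZMod q) : ℝ :=
  if y = a ∨ y = a + 1 then 1 else 0

section aux2
variable {q : ℕ} [NeZero q]

lemma uf_nonneg (y a : ZMod q) : 0 ≤ uf q y a := by
  unfold uf; split <;> norm_num

lemma sum_uf (hq : 4 ≤ q) (a : ZMod q) : ∑ z : ZMod q, uf q z a = 2 := by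
  have key : ∀ z : ZMod q, uf q z a
      = (if z = a then (1:ℝ) else 0) + (if z = a + 1 then 1 else 0) := by
    intro z
    unfold uf
    rcases eq_or_ne z a with h | h
    · subst h; simp [(add_one_ne hq z).symm]
    · rcases eq_or_ne z (a + 1) with h2 | h2
      · subst h2; simp [h]
      · simp [h, h2]
  simp only [key, Finset.sum_add_distrib, Finset.sum_ite_eq' Finset.univ,
    Finset.mem_univ, if_true]
  norm_num

lemma sum_uu (hq : 4 ≤ q) (a b : ZMod q) :
    ∑ y : ZMod q, uf q y a * uf q y b
      = (if a = b then (2:ℝ) else if b = a + 1 ∨ a = b + 1 then 1 else 0) := by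
  rcases eq_or_ne a b with rfl | hab
  · have : ∀ y : ZMod q, uf q y a * uf q y a = uf q y a := by
      intro y; unfold uf; split <;> norm_num
    rw [Finset.sum_congr rfl fun y _ => this y, sum_uf hq]
    simp
  · rcases eq_or_ne b (a + 1) with rfl | hb
    · have n1 : a ≠ a + 1 := (add_one_ne hq a).symm
      have n2 : a ≠ a + 1 + 1 := (add_two_ne hq a).symm
      have key : ∀ y : ZMod q, uf q y a * uf q y (a + 1)
          = (if y = a + 1 then (1:ℝ) else 0) := by
        intro y
        unfold uf
        by_cases h1 : y = a
        · subst h1; simp [n1, n2]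
        · by_cases h2 : y = a + 1
          · subst h2; simp
          · simp [h1, h2]
      rw [Finset.sum_congr rfl fun y _ => key y]
      simp only [Finset.sum_ite_eq' Finset.univ, Finset.mem_univ, if_true]
      simp [hab]
    · rcases eq_or_ne a (b + 1) with rfl | ha
      · have m1 : b ≠ b + 1 := (add_one_ne hq b).symm
        have m2 : b ≠ b + 1 + 1 := (add_two_ne hq b).symm
        have key : ∀ y : ZMod q, uf q y (b + 1) * uf q y b
            = (if y = b + 1 then (1:ℝ) else 0) := by
          intro y
          unfold uf
          by_cases h1 : y = b
          · subst h1; simp [m1, m2]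
          · by_cases h2 : y = b + 1
            · subst h2; simp
            · simp [h1, h2]
        rw [Finset.sum_congr rfl fun y _ => key y]
        simp only [Finset.sum_ite_eq' Finset.univ, Finset.mem_univ, if_true]
        simp [hab, hb]
      · have hc : a + 1 ≠ b + 1 := fun h => hab (add_right_cancel h)
        have key : ∀ y : ZMod q, uf q y a * uf q y b = 0 := by
          intro y
          unfold uf
          by_cases h1 : y = a
          · subst h1; simp [hab, ha]
          · by_cases h2 : y = a + 1
            · subst h2; simp [Ne.symm hb, hc]
            · simp [h1, h2]
        rw [Finset.sum_congr rfl fun y _ => key y]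
        simp [hab, hb, ha]

lemma card_ker (hq : 4 ≤ q) (h2 : (2:ℕ) ∣ q) :
    2 * (Finset.univ.filter
      (fun a : ZMod q => ZMod.castHom h2 (ZMod 2) a = 0)).card = q := by
  set φ := ZMod.castHom h2 (ZMod 2) with hφ
  have hbij : (Finset.univ.filter (fun a : ZMod q => φ a = 0)).card
      = (Finset.univ.filter (fun a : ZMod q => φ a = 1)).card := by
    apply Finset.card_bij (fun a _ => a + 1)
    · intro a ha
      simp only [Finset.mem_filter, Finset.mem_univ, true_and] at ha ⊢
      rw [map_add, ha, map_one, zero_add]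
    · intro a ha b hb h
      exact add_right_cancel h
    · intro b hb
      simp only [Finset.mem_filter, Finset.mem_univ, true_and] at hb ⊢
      refine ⟨b - 1, ?_, by ring⟩
      rw [map_sub, hb, map_one, sub_self]
  have hsplit := Finset.card_filter_add_card_filter_not
    (s := (Finset.univ : Finset (ZMod q))) (p := fun a => φ a = 0)
  have hneg : (Finset.univ.filter (fun a : ZMod q => ¬ φ a = 0))
      = (Finset.univ.filter (fun a : ZMod q => φ a = 1)) := by
    apply Finset.filter_congr
    intro a _
    have : ∀ b : ZMod 2, (¬ b = 0) ↔ b = 1 := by decide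
    exact this (φ a)
  rw [hneg, Finset.card_univ, ZMod.card] at hsplit
  omega

end aux2

lemma quad {A Y : Type*} [Fintype A] [Fintype Y] (c : A → Y → ℝ) :
    ∑ x : A, ∑ x' : A, ∑ y : Y, c x y * c x' y = ∑ y : Y, (∑ x : A, c x y)^2 := by
  have h1 : ∀ x : A, ∑ x' : A, ∑ y : Y, c x y * c x' y
      = ∑ y : Y, c x y * ∑ x' : A, c x' y := by
    intro x
    rw [Finset.sum_comm]
    exact Finset.sum_congr rfl fun y _ => (Finset.mul_sum _ _ _).symm
  simp only [h1]
  rw [Finset.sum_comm]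
  refine Finset.sum_congr rfl fun y _ => ?_
  rw [sq, ← Finset.sum_mul]

lemma sum_prod_eq {A : Type*} [Fintype A] [DecidableEq A] (n : ℕ) (f : Fin n → A → ℝ) :
    ∑ x : Fin n → A, ∏ k, f k (x k) = ∏ k, ∑ a, f k a := by
  rw [Finset.prod_univ_sum, Fintype.piFinset_univ]

lemma g1_nonneg {q : ℕ} [NeZero q] (ε : ℝ) (a b : ZMod q) : 0 ≤ g1 q ε a b :=
  Finset.sum_nonneg fun y _ => Real.sqrt_nonneg _

lemma g1_comm {q : ℕ} [NeZero q] (ε : ℝ) (a b : ZMod q) : g1 q ε a b = g1 q ε b a := by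
  unfold g1; exact Finset.sum_congr rfl fun y _ => by rw [mul_comm]


theorem stmt2 (q n : ℕ) [NeZero q] (hq : 4 ≤ q) (hqe : Even q) (hn : 1 ≤ n)
    (ε ρ : ℝ) (hε : 0 < ε) (hε' : ε ≤ 1 / 2) (hρ : 1 ≤ ρ)
    (hcond : 1 / 2 ≤ alphaE ε ^ (1 / ρ)) :
    IsLeast
      {v : ℝ | ∃ P : (Fin n → ZMod q) → ℝ,
        (∀ x, 0 ≤ P x) ∧ (∑ x, P x = 1) ∧ v = Qn q n ε ρ P}
      ((2 / q : ℝ) ^ n) := by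
  have hε0 : (0:ℝ) ≤ ε := le_of_lt hε
  have hε1 : ε ≤ 1 := by linarith
  have hq0 : (0:ℝ) < q := by
    have : (4:ℝ) ≤ q := by exact_mod_cast hq
    linarith
  have hρ0 : (0:ℝ) < ρ := by linarith
  have hinvρ : (1:ℝ)/ρ ≠ 0 := ne_of_gt (by positivity)
  have h2 : (2:ℕ) ∣ q := hqe.two_dvd
  constructor
  · -- membership: the uniform distribution on "even" strings
    set φ := ZMod.castHom h2 (ZMod 2) with hφdef
    set ind : ZMod q → ℝ := fun a => if φ a = 0 then 1 else 0 with hind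
    have hindsum : ∑ a : ZMod q, ind a = (q:ℝ)/2 := by
      rw [hind]
      rw [Finset.sum_boole]
      have hck := card_ker hq h2
      rw [← hφdef] at hck
      have : ((Finset.univ.filter (fun a : ZMod q => φ a = 0)).card : ℝ) * 2 = (q:ℝ) := by
        exact_mod_cast by omega
      linarith
    set P0 : (Fin n → ZMod q) → ℝ := fun x => (2/(q:ℝ))^n * ∏ k, ind (x k) with hP0def
    have hindnn : ∀ a, 0 ≤ ind a := by
      intro a; rw [hind]; dsimp only; split <;> norm_num
    have hP0nn : ∀ x, 0 ≤ P0 x := by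
      intro x
      apply mul_nonneg (by positivity)
      exact Finset.prod_nonneg fun k _ => hindnn _
    have hsum_ind : ∑ x : Fin n → ZMod q, ∏ k, ind (x k) = ((q:ℝ)/2)^n := by
      rw [sum_prod_eq]
      rw [Finset.prod_congr rfl fun k _ => hindsum]
      rw [Finset.prod_const, Finset.card_univ, Fintype.card_fin]
    have hP0sum : ∑ x, P0 x = 1 := by
      rw [hP0def]
      dsimp only
      rw [← Finset.mul_sum, hsum_ind, ← mul_pow]
      rw [div_mul_div_comm]
      rw [show (2:ℝ) * q / (q * 2) = 1 by rw [mul_comm]; exact div_self (by positivity)]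
      exact one_pow n
    have hsupp : ∀ x : Fin n → ZMod q, P0 x ≠ 0 → ∀ k, φ (x k) = 0 := by
      intro x hx k
      by_contra hk
      apply hx
      rw [hP0def]
      dsimp only
      rw [Finset.prod_eq_zero (Finset.mem_univ k) (by rw [hind]; simp [hk])]
      ring
    have hQnval : Qn q n ε ρ P0 = (2/(q:ℝ))^n := by
      rw [Qn]
      have hdiag : ∀ x : Fin n → ZMod q,
          ∑ x' : Fin n → ZMod q, P0 x * P0 x' * (gn q n ε x x') ^ (1/ρ)
            = P0 x * P0 x := by
        intro x
        rw [Finset.sum_eq_single x]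
        · have hg : gn q n ε x x = 1 := by
            rw [gn]
            exact Finset.prod_eq_one fun k _ => g1_self hq hε0 hε1 _
          rw [hg, Real.one_rpow, mul_one]
        · intro x' _ hx'
          by_cases h1 : P0 x = 0
          · rw [h1]; ring
          by_cases h2' : P0 x' = 0
          · rw [h2']; ring
          have hgz : gn q n ε x x' = 0 := by
            obtain ⟨k, hk⟩ : ∃ k, x k ≠ x' k := by
              by_contra hcon
              push_neg at hcon
              exact hx' (funext fun k => (hcon k).symm)
            apply Finset.prod_eq_zero (Finset.mem_univ k)
            refine g1_far hq hε0 hε1 hk ?_ ?_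
            · intro hc
              have := hsupp x h1 k
              rw [hc, map_add, hsupp x' h2' k, map_one, zero_add] at this
              exact one_ne_zero this
            · intro hc
              have := hsupp x' h2' k
              rw [hc, map_add, hsupp x h1 k, map_one, zero_add] at this
              exact one_ne_zero this
          rw [hgz, Real.zero_rpow hinvρ, mul_zero]
        · intro h; exact absurd (Finset.mem_univ x) h
      rw [Finset.sum_congr rfl fun x _ => hdiag x]
      have hsq : ∀ x, P0 x * P0 x = (2/(q:ℝ))^n * P0 x := by
        intro x
        rw [hP0def]
        dsimp only
        have hA : (∏ k, ind (x k)) * (∏ k, ind (x k)) = ∏ k, ind (x k) := by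
          rw [← Finset.prod_mul_distrib]
          refine Finset.prod_congr rfl fun k _ => ?_
          rw [hind]; dsimp only; split <;> norm_num
        calc ((2/(q:ℝ))^n * ∏ k, ind (x k)) * ((2/(q:ℝ))^n * ∏ k, ind (x k))
            = (2/(q:ℝ))^n * ((2/(q:ℝ))^n * ((∏ k, ind (x k)) * (∏ k, ind (x k)))) := by
              ring
          _ = (2/(q:ℝ))^n * ((2/(q:ℝ))^n * ∏ k, ind (x k)) := by rw [hA]
      rw [Finset.sum_congr rfl fun x _ => hsq x, ← Finset.mul_sum, hP0sum, mul_one]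
    exact ⟨P0, hP0nn, hP0sum, hQnval.symm⟩
  · -- lower bound
    rintro v ⟨P, hPnn, hPsum, rfl⟩
    set c : (Fin n → ZMod q) → (Fin n → ZMod q) → ℝ :=
      fun x y => P x * ∏ k, uf q (y k) (x k) with hc
    set F : (Fin n → ZMod q) → ℝ := fun y => ∑ x, c x y with hF
    have hkey : ∀ a b : ZMod q,
        (1/2:ℝ) * ∑ y : ZMod q, uf q y a * uf q y b ≤ g1 q ε a b ^ (1/ρ) := by
      intro a b
      rw [sum_uu hq]
      rcases eq_or_ne a b with rfl | hab
      · rw [if_pos rfl, g1_self hq hε0 hε1, Real.one_rpow]; norm_num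
      · rw [if_neg hab]
        by_cases hadj : b = a + 1 ∨ a = b + 1
        · rw [if_pos hadj]
          have hg : g1 q ε a b = alphaE ε := by
            rcases hadj with rfl | rfl
            · exact g1_adj hq hε0 hε1 a
            · rw [g1_comm]; exact g1_adj hq hε0 hε1 b
          rw [hg, mul_one]
          exact hcond
        · push_neg at hadj
          rw [if_neg (by push_neg; exact hadj)]
          rw [g1_far hq hε0 hε1 hab hadj.2 hadj.1, Real.zero_rpow hinvρ]
          norm_num
    have hkey0 : ∀ a b : ZMod q,
        0 ≤ (1/2:ℝ) * ∑ y : ZMod q, uf q y a * uf q y b := by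
      intro a b
      apply mul_nonneg (by norm_num)
      exact Finset.sum_nonneg fun y _ => mul_nonneg (uf_nonneg _ _) (uf_nonneg _ _)
    have step1 : ∀ x x' : Fin n → ZMod q,
        ∏ k, ((1/2:ℝ) * ∑ y : ZMod q, uf q y (x k) * uf q y (x' k))
          ≤ (gn q n ε x x') ^ (1/ρ) := by
      intro x x'
      rw [gn, ← Real.finset_prod_rpow _ _ (fun k _ => g1_nonneg ε _ _) _]
      exact Finset.prod_le_prod (fun k _ => hkey0 _ _) (fun k _ => hkey _ _)
    have step2 : ∑ x : Fin n → ZMod q, ∑ x' : Fin n → ZMod q,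
        P x * P x' * ∏ k, ((1/2:ℝ) * ∑ y : ZMod q, uf q y (x k) * uf q y (x' k))
          ≤ Qn q n ε ρ P := by
      rw [Qn]
      refine Finset.sum_le_sum fun x _ => Finset.sum_le_sum fun x' _ => ?_
      exact mul_le_mul_of_nonneg_left (step1 x x')
        (mul_nonneg (hPnn x) (hPnn x'))
    have hterm : ∀ x x' : Fin n → ZMod q,
        P x * P x' * ∏ k, ((1/2:ℝ) * ∑ y : ZMod q, uf q y (x k) * uf q y (x' k))
          = (1/2:ℝ)^n * ∑ y : Fin n → ZMod q, c x y * c x' y := by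
      intro x x'
      rw [Finset.prod_mul_distrib, Finset.prod_const, Finset.card_univ, Fintype.card_fin]
      rw [show (∏ k, ∑ y : ZMod q, uf q y (x k) * uf q y (x' k))
          = ∑ y : Fin n → ZMod q, ∏ k, uf q (y k) (x k) * uf q (y k) (x' k) from
        (sum_prod_eq n (fun k z => uf q z (x k) * uf q z (x' k))).symm]
      simp only [Finset.mul_sum]
      refine Finset.sum_congr rfl fun y _ => ?_
      rw [Finset.prod_mul_distrib, hc]
      dsimp only
      ring
    have identity : ∑ x : Fin n → ZMod q, ∑ x' : Fin n → ZMod q,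
        P x * P x' * ∏ k, ((1/2:ℝ) * ∑ y : ZMod q, uf q y (x k) * uf q y (x' k))
          = (1/2:ℝ)^n * ∑ y : Fin n → ZMod q, (F y)^2 := by
      rw [Finset.sum_congr rfl fun x _ => Finset.sum_congr rfl fun x' _ => hterm x x']
      simp only [← Finset.mul_sum]
      rw [quad c]
    have hFsum : ∑ y : Fin n → ZMod q, F y = 2^n := by
      rw [hF]
      dsimp only
      rw [Finset.sum_comm]
      have hx : ∀ x : Fin n → ZMod q, ∑ y : Fin n → ZMod q, c x y = P x * 2^n := by
        intro x
        rw [hc]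
        dsimp only
        rw [← Finset.mul_sum]
        rw [sum_prod_eq n (fun k z => uf q z (x k))]
        rw [Finset.prod_congr rfl fun k _ => sum_uf hq (x k)]
        rw [Finset.prod_const, Finset.card_univ, Fintype.card_fin]
      rw [Finset.sum_congr rfl fun x _ => hx x, ← Finset.sum_mul, hPsum, one_mul]
    have hCS := sq_sum_le_card_mul_sum_sq (s := (Finset.univ : Finset (Fin n → ZMod q)))
      (f := F)
    rw [hFsum, Finset.card_univ] at hCS
    have hcard : ((Fintype.card (Fin n → ZMod q) : ℕ) : ℝ) = (q:ℝ)^n := by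
      rw [Fintype.card_fun, Fintype.card_fin, ZMod.card]
      push_cast
      ring
    rw [hcard] at hCS
    -- hCS : (2^n)^2 ≤ q^n * ∑ y, F y ^ 2
    set S : ℝ := ∑ y : Fin n → ZMod q, (F y)^2 with hS
    have hfin : ((2:ℝ)/q)^n ≤ (1/2:ℝ)^n * S := by
      have hqn : (0:ℝ) < (q:ℝ)^n := by positivity
      have h2n : (0:ℝ) < (2:ℝ)^n := by positivity
      rw [div_pow, div_le_iff₀ hqn, one_div, inv_pow]
      rw [show ((2:ℝ)^n)⁻¹ * S * (q:ℝ)^n = ((q:ℝ)^n * S) / (2:ℝ)^n by ring]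
      rw [le_div_iff₀ h2n]
      nlinarith [hCS]
    calc ((2:ℝ)/q)^n ≤ (1/2:ℝ)^n * S := hfin
      _ = ∑ x : Fin n → ZMod q, ∑ x' : Fin n → ZMod q,
          P x * P x' * ∏ k, ((1/2:ℝ) * ∑ y : ZMod q, uf q y (x k) * uf q y (x' k)) :=
        identity.symm
      _ ≤ Qn q n ε ρ P := step2
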